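/- If d* = d is a selfadjoint metric on the double of X, then d ∘ d is quasi-isometric to d if and only if there exist α ≥ 0, β ≥ 1 such that d(x,X') ≥ -α + (1/β) d(x,x') for all x ∈ X, where d(x,X') = inf_{y∈X} d(x,y'). -/

import Mathlib

open Metric

/-- A cross-metric between metric spaces `X` and `Y`: the cross-distance part
`k x y = d(x, y)` of a metric on `X ⊔ Y` extending the given metrics, with the
distance between the two pieces bounded below away from zero. -/
structure CrossMetric (X Y : Type*) [MetricSpace X] [MetricSpace Y] where
  k : X → Y → ℝ
  sep : ∃ ε > 0, ∀ x y, ε ≤ k x y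
  tri_left : ∀ x x' y, k x y ≤ dist x x' + k x' y
  tri_right : ∀ x y y', k x y ≤ k x y' + dist y' y
  cross_left : ∀ x x' y, dist x x' ≤ k x y + k x' y
  cross_right : ∀ x y y', dist y y' ≤ k x y + k x y'

/-- Composition of cross-metrics: `(ρ ∘ d)(x,z) = inf_y [d(x,y) + ρ(y,z)]`. -/
noncomputable def compFun {X Y Z : Type*} (ρ : Y → Z → ℝ) (d : X → Y → ℝ) : X → Z → ℝ :=
  fun x z => ⨅ y, (d x y + ρ y z)

/-- The adjoint cross-metric: `d*(y,x) = d(x,y)`. -/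
def adjFun {X Y : Type*} (d : X → Y → ℝ) : Y → X → ℝ := fun y x => d x y

/-- Quasi-isometry of two cross-distance functions. -/
def QI {X Y : Type*} (d1 d2 : X → Y → ℝ) : Prop :=
  ∃ α > 0, ∃ β ≥ (1:ℝ), ∀ x y,
    -α + (1/β) * d1 x y ≤ d2 x y ∧ d2 x y ≤ α + β * d1 x y

/-!
Write `d(x,X') = inf_y d(x,y')`. Self-adjointness gives
`(d∘d)(x,x') ≤ d(x,y') + d(y,x') = 2 d(x,y')`, so the lower quasi-isometry bound for `d∘d` on the
diagonal is exactly a linear bound of `d(x,x')` by `d(x,X')`. Conversely, such a bound controls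
`d(y,y')` linearly by `d(y,z')` for every `z`, and the two quasi-isometry inequalities follow from
`d(x,z') ≤ d(x,y') + d(y,y') + d(y,z')` and `(d∘d)(x,z') ≤ d(x,x') + d(x,z')`.
-/

theorem neg_add_one_div_mul_le_iff {α β u v : ℝ} (hβ : 0 < β) :
    -α + 1 / β * u ≤ v ↔ u ≤ β * (α + v) := by
  rw [neg_add_le_iff_le_add, one_div, inv_mul_le_iff₀ hβ]

theorem QI.of_le {X Y : Type*} {d1 d2 : X → Y → ℝ} {a b : ℝ} (ha : 0 ≤ a) (hb : 1 ≤ b)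
    (h12 : ∀ x y, d1 x y ≤ a + b * d2 x y) (h21 : ∀ x y, d2 x y ≤ a + b * d1 x y) :
    QI d1 d2 := by
  refine ⟨a + 1, by positivity, b, hb, fun x y => ⟨?_, by linarith [h21 x y]⟩⟩
  rw [neg_add_one_div_mul_le_iff (by linarith)]
  nlinarith [h12 x y]

namespace CrossMetric

variable {X Y Z : Type*} [MetricSpace X] [MetricSpace Y] [MetricSpace Z]

theorem k_nonneg (d : CrossMetric X Y) (x : X) (y : Y) : 0 ≤ d.k x y := by
  linarith [d.cross_left x x y, dist_self x]

theorem bddBelow_range_k (d : CrossMetric X Y) (x : X) : BddBelow (Set.range (d.k x)) :=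
  ⟨0, Set.forall_mem_range.2 (d.k_nonneg x)⟩

theorem k_le_k_add_k_add_k (d : CrossMetric X Y) (x x₁ : X) (y y₁ : Y) :
    d.k x y ≤ d.k x y₁ + d.k x₁ y₁ + d.k x₁ y := by
  linarith [d.tri_left x x₁ y, d.cross_left x x₁ y₁]

theorem compFun_le (d : CrossMetric X Y) (ρ : CrossMetric Y Z) (x : X) (y : Y) (z : Z) :
    compFun ρ.k d.k x z ≤ d.k x y + ρ.k y z :=
  ciInf_le ⟨0, Set.forall_mem_range.2 fun y => add_nonneg (d.k_nonneg x y) (ρ.k_nonneg y z)⟩ y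

theorem le_compFun [Nonempty Y] (d : CrossMetric X Y) (ρ : CrossMetric Y Z) {x : X} {z : Z}
    {c : ℝ} (h : ∀ y, c ≤ d.k x y + ρ.k y z) : c ≤ compFun ρ.k d.k x z :=
  le_ciInf h

variable (d : CrossMetric X X)

theorem forall_neg_add_one_div_mul_le_iInf_iff {α β : ℝ} (hβ : 0 < β) :
    (∀ x, -α + 1 / β * d.k x x ≤ ⨅ y, d.k x y) ↔ ∀ x y, d.k x x ≤ β * (α + d.k x y) := by
  refine forall_congr' fun x => ?_
  have : Nonempty X := ⟨x⟩
  rw [le_ciInf_iff (d.bddBelow_range_k x)]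
  exact forall_congr' fun _ => neg_add_one_div_mul_le_iff hβ

theorem exists_diag_le_of_qi_compFun (hsa : ∀ x y, d.k x y = d.k y x)
    (h : QI (compFun d.k d.k) d.k) :
    ∃ α ≥ (0 : ℝ), ∃ β ≥ (1 : ℝ), ∀ x y, d.k x x ≤ β * (α + d.k x y) := by
  obtain ⟨α, hα, β, hβ, hqi⟩ := h
  refine ⟨α / (2 * β), by positivity, 2 * β, by linarith, fun x y => ?_⟩
  have hcomp : compFun d.k d.k x x ≤ 2 * d.k x y := by
    linarith [d.compFun_le d x y x, hsa y x]
  calc d.k x x ≤ α + β * compFun d.k d.k x x := (hqi x x).2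
    _ ≤ α + β * (2 * d.k x y) := by gcongr
    _ = 2 * β * (α / (2 * β) + d.k x y) := by field_simp

theorem qi_compFun_of_diag_le {α β : ℝ} (hα : 0 ≤ α) (hβ : 1 ≤ β)
    (h : ∀ x y, d.k x x ≤ β * (α + d.k x y)) : QI (compFun d.k d.k) d.k := by
  refine QI.of_le (mul_nonneg (by linarith) hα) (by linarith : 1 ≤ β + 1)
    (fun x z => ?_) (fun x z => ?_)
  · linarith [d.compFun_le d x x z, h x z]
  · have : Nonempty X := ⟨x⟩
    suffices (d.k x z - β * α) / (β + 1) ≤ compFun d.k d.k x z by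
      rw [div_le_iff₀ (by linarith)] at this
      linarith
    refine d.le_compFun d fun y => (div_le_iff₀ (by linarith)).2 ?_
    have hxy : 0 ≤ β * d.k x y := mul_nonneg (by linarith) (d.k_nonneg x y)
    linarith [d.k_le_k_add_k_add_k x y z y, h y z]

end CrossMetric

theorem statement5_general {X : Type*} [MetricSpace X] (d : CrossMetric X X)
    (hsa : ∀ x y, d.k x y = d.k y x) :
    QI (compFun d.k d.k) d.k ↔
      ∃ α ≥ (0:ℝ), ∃ β ≥ (1:ℝ), ∀ x, -α + (1/β) * d.k x x ≤ ⨅ y, d.k x y := by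
  constructor
  · intro h
    obtain ⟨α, hα, β, hβ, hdiag⟩ := d.exists_diag_le_of_qi_compFun hsa h
    exact ⟨α, hα, β, hβ, (d.forall_neg_add_one_div_mul_le_iInf_iff (by linarith)).2 hdiag⟩
  · rintro ⟨α, hα, β, hβ, h⟩
    rw [d.forall_neg_add_one_div_mul_le_iInf_iff (by linarith)] at h
    exact d.qi_compFun_of_diag_le hα hβ h

/-- a selfadjoint metric `d` on the double of `X` is idempotent
(`d ∘ d ~ d`) iff there are `α ≥ 0`, `β ≥ 1` with
`d(x,X') ≥ -α + (1/β) d(x,x')` for all `x`, where `d(x,X') = inf_y d(x,y')`. -/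
theorem statement5 {X : Type*} [MetricSpace X] [Nonempty X] (d : CrossMetric X X)
    (hsa : ∀ x y, d.k x y = d.k y x) :
    QI (compFun d.k d.k) d.k ↔
      ∃ α ≥ (0:ℝ), ∃ β ≥ (1:ℝ), ∀ x, -α + (1/β) * d.k x x ≤ ⨅ y, d.k x y :=
  statement5_general d hsa
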